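/- For every real number k and every complex number z with Im z > 0, P_k(z − 5/12) + P_k(z − 1/12) + P_k(z + 1/12) + P_k(z + 5/12) = (2^k + 1)·( 2^{1−k}·P_k(2z) + 4^{1−k}·P_k(8z) + 6^{1−k}·P_k(18z) + 12^{1−k}·P_k(72z) ) − ((2^k + 1)^2 − 2^{k−1})·( 4^{1−k}·P_k(4z) − 12^{1−k}·(3^k + 1)·P_k(12z) + 12^{1−k}·P_k(36z) ) − 6^{1−k}·(2^k + 1)·(3^k + 1)·( P_k(6z) + 2^{1−k}·P_k(24z) ). -/

import Mathlib

/-!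
With q = e^{2πiz}, expanding each qⁿ/(1 - qⁿ) geometrically gives
P_k(z) = Σ_{n,m ≥ 1} n^{-k} q^{nm}. Translating z by j/12 multiplies the (n, m) term by ζ^{jnm},
ζ = e^{2πi/12}, so the left-hand side is this double series weighted by Ramanujan's sum
c₁₂(nm) = Σ_{j ∈ (ℤ/12)ˣ} ζ^{jnm}. On the other side, c^{-k} P_k(cdz) is the same double series
restricted to c ∣ n, d ∣ m. Both weights only depend on n and m modulo 12, so the identity comes
down to writing c₁₂(nm) as an integer combination of the indicators [c ∣ n ∧ d ∣ m], a finite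
check; the powers of 2^k and 3^k on the right-hand side are what turns the factors c^{-k} into
these integers.
-/

/-- P_k(z) = Σ_{n=1}^∞ n^{−k} · e^{2πinz}/(1 − e^{2πinz}), for real k and Im z > 0. -/
noncomputable def P (k : ℝ) (z : ℂ) : ℂ :=
  ∑' n : ℕ+, (n : ℂ) ^ (-(k : ℂ)) *
    (Complex.exp (2 * Real.pi * Complex.I * n * z) /
      (1 - Complex.exp (2 * Real.pi * Complex.I * n * z)))

open Complex Real

noncomputable def lambertTerm (k : ℝ) (q : ℂ) (p : ℕ+ × ℕ+) : ℂ :=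
  ((p.1 : ℝ) ^ (-k) : ℝ) * q ^ ((p.1 : ℕ) * p.2)

lemma summable_lambertTerm (k : ℝ) {q : ℂ} (hq : ‖q‖ < 1) : Summable (lambertTerm k q) := by
  have hK := (summable_prod_mul_pow ⌈-k⌉₊ (r := ‖q‖) (by simpa using hq)).prod_symm
  refine hK.of_norm_bounded fun p ↦ ?_
  have hp : (1 : ℝ) ≤ p.1 := by exact_mod_cast p.1.pos
  rw [lambertTerm, norm_mul, norm_pow, norm_real, Real.norm_of_nonneg (by positivity),
    Prod.fst_swap, Prod.snd_swap, mul_comm (p.2 : ℕ)]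
  gcongr
  rw [← Real.rpow_natCast]
  exact Real.rpow_le_rpow_of_exponent_le hp (Nat.le_ceil _)

lemma hasSum_pnat_geometric_of_norm_lt_one {K : Type*} [NormedDivisionRing K] {x : K}
    (hx : ‖x‖ < 1) :
    HasSum (fun m : ℕ+ ↦ x ^ (m : ℕ)) (x / (1 - x)) := by
  rw [hasSum_pnat_iff_hasSum_succ]
  simpa [pow_succ', div_eq_mul_inv] using (hasSum_geometric_of_norm_lt_one hx).mul_left x

lemma hasSum_lambertTerm {k : ℝ} {z : ℂ} (hz : 0 < z.im) :
    HasSum (lambertTerm k (exp (2 * π * I * z))) (P k z) := by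
  set q := exp (2 * π * I * z)
  have hq := UpperHalfPlane.norm_exp_two_pi_I_lt_one ⟨z, hz⟩
  have hsum := (summable_lambertTerm k hq).hasSum
  convert hsum using 1
  refine (hsum.prod_fiberwise fun n ↦ ?_).tsum_eq
  have hqn : exp (2 * π * I * n * z) = q ^ (n : ℕ) := by rw [← Complex.exp_nat_mul]; ring_nf
  have hcast : ((n : ℕ+) : ℂ) ^ (-(k : ℂ)) = (((n : ℝ) ^ (-k) : ℝ) : ℂ) := by
    rw [ofReal_cpow (by positivity)]; push_cast; rfl
  have hqn_lt : ‖q ^ (n : ℕ)‖ < 1 := by simpa using pow_lt_one₀ (norm_nonneg q) hq n.ne_zero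
  simp only [lambertTerm, pow_mul, hqn, hcast]
  exact (hasSum_pnat_geometric_of_norm_lt_one hqn_lt).mul_left _

lemma lambertTerm_mul (k : ℝ) (q w : ℂ) (p : ℕ+ × ℕ+) :
    lambertTerm k (q * w) p = w ^ ((p.1 : ℕ) * p.2) * lambertTerm k q p := by
  simp only [lambertTerm, mul_pow]; ring

lemma hasSum_lambertTerm_add_ofReal {k : ℝ} {z : ℂ} (hz : 0 < z.im) (s : ℝ) :
    HasSum (fun p ↦ exp (2 * π * I * s) ^ ((p.1 : ℕ) * p.2) *
      lambertTerm k (exp (2 * π * I * z)) p) (P k (z + s)) := by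
  convert hasSum_lambertTerm (k := k) (z := z + s) (by simpa using hz) using 1
  ext p
  rw [mul_add, Complex.exp_add, lambertTerm_mul]

lemma hasSum_lambertTerm_dvd {k : ℝ} {z : ℂ} (hz : 0 < z.im) (c d : ℕ+) :
    HasSum (fun p : ℕ+ × ℕ+ ↦ if (c : ℕ) ∣ p.1 ∧ (d : ℕ) ∣ p.2 then
        lambertTerm k (exp (2 * π * I * z)) p else 0)
      ((((c : ℝ) ^ (-k) : ℝ) : ℂ) * P k (c * d * z)) := by
  set g : ℕ+ × ℕ+ → ℕ+ × ℕ+ := fun p ↦ (c * p.1, d * p.2)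
  have hg : Function.Injective g := fun p p' h ↦ by
    simp only [g, Prod.ext_iff, mul_right_inj] at h; exact Prod.ext h.1 h.2
  have hrange : ∀ p ∉ Set.range g, (if (c : ℕ) ∣ p.1 ∧ (d : ℕ) ∣ p.2 then
      lambertTerm k (exp (2 * π * I * z)) p else 0) = 0 := by
    rintro ⟨n, m⟩ hp
    rw [if_neg]
    rintro ⟨⟨a, ha⟩, ⟨b, hb⟩⟩
    have ha0 : 0 < a := Nat.pos_of_mul_pos_left (ha ▸ n.pos)
    have hb0 : 0 < b := Nat.pos_of_mul_pos_left (hb ▸ m.pos)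
    exact hp ⟨(⟨a, ha0⟩, ⟨b, hb0⟩), Prod.ext (PNat.eq ha.symm) (PNat.eq hb.symm)⟩
  have hcdz : 0 < ((c : ℂ) * d * z).im := by simp [mul_im]; positivity
  have hexp : exp (2 * π * I * (c * d * z)) = exp (2 * π * I * z) ^ ((c : ℕ) * d) := by
    rw [← Complex.exp_nat_mul]; push_cast; ring_nf
  have hcomp : (fun p : ℕ+ × ℕ+ ↦ if (c : ℕ) ∣ p.1 ∧ (d : ℕ) ∣ p.2 then
      lambertTerm k (exp (2 * π * I * z)) p else 0) ∘ g = fun p ↦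
        (((c : ℝ) ^ (-k) : ℝ) : ℂ) * lambertTerm k (exp (2 * π * I * (c * d * z))) p := by
    funext p
    simp only [Function.comp_apply, g, PNat.mul_coe, dvd_mul_right, and_self, if_true,
      lambertTerm, hexp, ← pow_mul]
    rw [Nat.cast_mul, Real.mul_rpow (by positivity) (by positivity)]
    push_cast
    ring_nf
  rw [← hg.hasSum_iff hrange, hcomp]
  exact (hasSum_lambertTerm hcdz).mul_left _

lemma IsPrimitiveRoot.geom_sum_pow_eq_ite {K : Type*} [Field K] {ω : K} {m : ℕ}
    (hω : IsPrimitiveRoot ω m) (r : ℕ) :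
    ∑ t ∈ Finset.range m, (ω ^ r) ^ t = if m ∣ r then (m : K) else 0 := by
  split_ifs with h
  · obtain ⟨s, rfl⟩ := h
    simp [pow_mul, hω.pow_eq_one]
  · have h1 : ω ^ r ≠ 1 := by rwa [Ne, hω.pow_eq_one_iff_dvd]
    rw [geom_sum_eq h1, ← pow_mul, mul_comm, pow_mul, hω.pow_eq_one, one_pow, sub_self,
      zero_div]

def ramanujanSumTwelve (r : ℕ) : ℤ :=
  (if 12 ∣ r then 12 else 0) - (if 6 ∣ r then 6 else 0) - (if 4 ∣ r then 4 else 0) +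
    (if 2 ∣ r then 2 else 0)

/-- The exponents 1, 5, 7, 11 are the residues prime to 12: inclusion–exclusion over divisibility
by 2 and 3 turns their sum into four complete geometric sums of roots of unity. -/
lemma IsPrimitiveRoot.sum_pow_coprime_twelve {K : Type*} [Field K] {ζ : K}
    (hζ : IsPrimitiveRoot ζ 12) (r : ℕ) :
    (ζ ^ 7) ^ r + (ζ ^ 11) ^ r + ζ ^ r + (ζ ^ 5) ^ r = ramanujanSumTwelve r := by
  have h12 := hζ.geom_sum_pow_eq_ite r
  have h6 := (hζ.pow (by norm_num) (show 12 = 2 * 6 by rfl)).geom_sum_pow_eq_ite r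
  have h4 := (hζ.pow (by norm_num) (show 12 = 3 * 4 by rfl)).geom_sum_pow_eq_ite r
  have h2 := (hζ.pow (by norm_num) (show 12 = 6 * 2 by rfl)).geom_sum_pow_eq_ite r
  simp only [ramanujanSumTwelve, Int.cast_add, Int.cast_sub, apply_ite (Int.cast : ℤ → K),
    Int.cast_ofNat, Int.cast_zero]
  push_cast at h12 h6 h4 h2
  rw [← h12, ← h6, ← h4, ← h2]
  simp only [Finset.sum_range_succ, Finset.sum_range_zero, pow_right_comm ζ _ r]
  ring

def divisorWeight (L : List (ℤ × ℕ+ × ℕ+)) (n m : ℕ) : ℤ :=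
  (L.map fun x ↦ if (x.2.1 : ℕ) ∣ n ∧ (x.2.2 : ℕ) ∣ m then x.1 else 0).sum

lemma divisorWeight_mod {L : List (ℤ × ℕ+ × ℕ+)} {N : ℕ}
    (hL : ∀ x ∈ L, (x.2.1 : ℕ) ∣ N ∧ (x.2.2 : ℕ) ∣ N) (n m : ℕ) :
    divisorWeight L (n % N) (m % N) = divisorWeight L n m := by
  unfold divisorWeight
  congr 1
  refine List.map_congr_left fun x hx ↦ ?_
  simp only [Nat.dvd_mod_iff (hL x hx).1, Nat.dvd_mod_iff (hL x hx).2]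

lemma hasSum_divisorWeight_mul_lambertTerm {k : ℝ} {z : ℂ} (hz : 0 < z.im)
    (L : List (ℤ × ℕ+ × ℕ+)) :
    HasSum (fun p : ℕ+ × ℕ+ ↦
        (divisorWeight L p.1 p.2 : ℂ) * lambertTerm k (exp (2 * π * I * z)) p)
      (L.map fun x ↦
        (x.1 : ℂ) * ((((x.2.1 : ℝ) ^ (-k) : ℝ) : ℂ) * P k (x.2.1 * x.2.2 * z))).sum := by
  induction L with
  | nil => simp [divisorWeight]
  | cons x L ih =>
    simp only [divisorWeight, List.map_cons, List.sum_cons] at ih ⊢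
    refine (((hasSum_lambertTerm_dvd (k := k) hz x.2.1 x.2.2).mul_left (x.1 : ℂ)).add
      ih).congr_fun fun p ↦ ?_
    push_cast
    split_ifs <;> ring

lemma ramanujanSumTwelve_mod (r : ℕ) : ramanujanSumTwelve (r % 12) = ramanujanSumTwelve r := by
  simp [ramanujanSumTwelve, Nat.dvd_mod_iff]

/-- An entry `(a, c, d)` stands for `a · [c ∣ n ∧ d ∣ m]`; the entries are grouped by the term
`P_k (c d z)` of the right-hand side they come from. -/
def twelvefoldWeights : List (ℤ × ℕ+ × ℕ+) :=
  [(2, 1, 2), (2, 2, 1),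
   (4, 2, 4), (4, 4, 2),
   (6, 3, 6), (6, 6, 3),
   (12, 6, 12), (12, 12, 6),
   (-4, 1, 4), (-6, 2, 2), (-4, 4, 1),
   (12, 1, 12), (12, 3, 4), (18, 2, 6), (18, 6, 2), (12, 4, 3), (12, 12, 1),
   (-12, 3, 12), (-18, 6, 6), (-12, 12, 3),
   (-6, 1, 6), (-6, 2, 3), (-6, 3, 2), (-6, 6, 1),
   (-12, 2, 12), (-12, 4, 6), (-12, 6, 4), (-12, 12, 2)]

lemma ramanujanSumTwelve_mul (n m : ℕ) :
    ramanujanSumTwelve (n * m) = divisorWeight twelvefoldWeights n m := by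
  have hresidues : ∀ a < 12, ∀ b < 12,
      ramanujanSumTwelve (a * b) = divisorWeight twelvefoldWeights a b := by decide
  have hdvd : ∀ x ∈ twelvefoldWeights, (x.2.1 : ℕ) ∣ 12 ∧ (x.2.2 : ℕ) ∣ 12 := by decide
  rw [← ramanujanSumTwelve_mod, Nat.mul_mod, ramanujanSumTwelve_mod, ← divisorWeight_mod hdvd]
  exact hresidues _ (Nat.mod_lt _ (by norm_num)) _ (Nat.mod_lt _ (by norm_num))

lemma hasSum_ramanujanSumTwelve_mul_lambertTerm {k : ℝ} {z : ℂ} (hz : 0 < z.im) :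
    HasSum (fun p : ℕ+ × ℕ+ ↦
        (ramanujanSumTwelve (p.1 * p.2) : ℂ) * lambertTerm k (exp (2 * π * I * z)) p)
      (P k (z - 5 / 12) + P k (z - 1 / 12) + P k (z + 1 / 12) + P k (z + 5 / 12)) := by
  set ζ := exp (2 * π * I / 12)
  have hζ : IsPrimitiveRoot ζ 12 := by
    simpa only [Nat.cast_ofNat] using isPrimitiveRoot_exp 12 (by norm_num)
  have hshift (s : ℝ) (j : ℕ) (n : ℤ) (hs : (s : ℂ) = j / 12 + n) :
      HasSum (fun p : ℕ+ × ℕ+ ↦ (ζ ^ j) ^ ((p.1 : ℕ) * p.2) *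
        lambertTerm k (exp (2 * π * I * z)) p) (P k (z + s)) := by
    have hexp : exp (2 * π * I * s) = ζ ^ j := by
      rw [hs, ← Complex.exp_nat_mul, exp_eq_exp_iff_exists_int]
      exact ⟨n, by ring⟩
    simpa only [hexp] using hasSum_lambertTerm_add_ofReal (k := k) hz s
  have h := (((hshift (-(5 / 12)) 7 (-1) (by push_cast; ring)).add
    (hshift (-(1 / 12)) 11 (-1) (by push_cast; ring))).add
    (hshift (1 / 12) 1 0 (by push_cast; ring))).add (hshift (5 / 12) 5 0 (by push_cast; ring))
  push_cast [← sub_eq_add_neg] at h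
  refine h.congr_fun fun p ↦ ?_
  rw [← hζ.sum_pow_coprime_twelve]
  ring

theorem twelvefold (k : ℝ) (z : ℂ) (hz : 0 < z.im) :
    P k (z - 5 / 12) + P k (z - 1 / 12) + P k (z + 1 / 12) + P k (z + 5 / 12) =
      ((((2 : ℝ) ^ k : ℝ) : ℂ) + 1) *
          ((((2 : ℝ) ^ (1 - k) : ℝ) : ℂ) * P k (2 * z)
            + (((4 : ℝ) ^ (1 - k) : ℝ) : ℂ) * P k (8 * z)
            + (((6 : ℝ) ^ (1 - k) : ℝ) : ℂ) * P k (18 * z)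
            + (((12 : ℝ) ^ (1 - k) : ℝ) : ℂ) * P k (72 * z))
        - (((((2 : ℝ) ^ k : ℝ) : ℂ) + 1) ^ 2 - (((2 : ℝ) ^ (k - 1) : ℝ) : ℂ)) *
            ((((4 : ℝ) ^ (1 - k) : ℝ) : ℂ) * P k (4 * z)
              - (((12 : ℝ) ^ (1 - k) : ℝ) : ℂ) * ((((3 : ℝ) ^ k : ℝ) : ℂ) + 1) * P k (12 * z)
              + (((12 : ℝ) ^ (1 - k) : ℝ) : ℂ) * P k (36 * z))
        - (((6 : ℝ) ^ (1 - k) : ℝ) : ℂ) * ((((2 : ℝ) ^ k : ℝ) : ℂ) + 1) *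
            ((((3 : ℝ) ^ k : ℝ) : ℂ) + 1) *
            (P k (6 * z) + (((2 : ℝ) ^ (1 - k) : ℝ) : ℂ) * P k (24 * z)) := by
  have hR := hasSum_divisorWeight_mul_lambertTerm (k := k) hz twelvefoldWeights
  simp only [← ramanujanSumTwelve_mul] at hR
  rw [(hasSum_ramanujanSumTwelve_mul_lambertTerm hz).unique hR]
  have h4 : (4 : ℝ) ^ k = 2 ^ k * 2 ^ k := by rw [← Real.mul_rpow] <;> norm_num
  have h6 : (6 : ℝ) ^ k = 2 ^ k * 3 ^ k := by rw [← Real.mul_rpow] <;> norm_num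
  have h12 : (12 : ℝ) ^ k = 2 ^ k * 2 ^ k * 3 ^ k := by
    rw [← Real.mul_rpow, ← Real.mul_rpow] <;> norm_num
  have h2 : (((2 : ℝ) ^ k : ℝ) : ℂ) ≠ 0 := ofReal_ne_zero.mpr (by positivity)
  have h3 : (((3 : ℝ) ^ k : ℝ) : ℂ) ≠ 0 := ofReal_ne_zero.mpr (by positivity)
  norm_num [twelvefoldWeights]
  simp (disch := norm_num) only [Real.rpow_neg, Real.rpow_sub, Real.rpow_one, h4, h6, h12]
  push_cast
  field_simp
  ring
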